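/- Let s : ℝ → ℝ be concave, nondecreasing, and positive on [1,∞). Suppose a total amount of work x₁ + x₂ is processed in two phases: work x₁ > 0 at rate s(k₁) taking time t₁ = x₁/s(k₁), and work x₂ > 0 at rate s(k₂) taking time t₂ = x₂/s(k₂), with k₁, k₂ ≥ 1. Define the time-averaged allocation k = k₁·t₁/(t₁+t₂) + k₂·t₂/(t₁+t₂). Then (x₁ + x₂)/s(k) ≤ t₁ + t₂, i.e., processing all the work at the constant allocation k completes at least as fast. -/

import Mathlib

/-!
Weighting each phase by its duration `tᵢ`, the average of the rates `s kᵢ` is total work over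
total time, `(x₁ + x₂) / (t₁ + t₂)`. By concave Jensen, `s` at the time-averaged allocation is
at least this average rate.
-/

open Finset

section TimeAveragedAllocation

variable {ι E : Type*} [AddCommGroup E] [Module ℝ E]

theorem Finset.centerMass_div_self_eq (I : Finset ι) (x r : ι → ℝ) (hr : ∀ i ∈ I, r i ≠ 0) :
    I.centerMass (fun i ↦ x i / r i) r = (∑ i ∈ I, x i) / ∑ i ∈ I, x i / r i := by
  rw [centerMass, smul_eq_mul, inv_mul_eq_div]
  congr 1
  exact sum_congr rfl fun i hi ↦ div_mul_cancel₀ (x i) (hr i hi)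

theorem ConcaveOn.sum_div_map_centerMass_le {D : Set E} {s : E → ℝ} (hs : ConcaveOn ℝ D s)
    (I : Finset ι) (x : ι → ℝ) (k : ι → E)
    (hx : ∀ i ∈ I, 0 ≤ x i) (hk : ∀ i ∈ I, k i ∈ D) (hpos : ∀ i ∈ I, 0 < s (k i)) :
    (∑ i ∈ I, x i) / s (I.centerMass (fun i ↦ x i / s (k i)) k) ≤ ∑ i ∈ I, x i / s (k i) := by
  have ht : ∀ i ∈ I, 0 ≤ x i / s (k i) := fun i hi ↦ div_nonneg (hx i hi) (hpos i hi).le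
  rcases (sum_nonneg ht).eq_or_lt with hT | hT
  · have hx0 : ∀ i ∈ I, x i = 0 := fun i hi ↦ by
      simpa [(hpos i hi).ne'] using (sum_eq_zero_iff_of_nonneg ht).1 hT.symm i hi
    rw [sum_eq_zero hx0, zero_div, ← hT]
  have hjensen : (∑ i ∈ I, x i) / ∑ i ∈ I, x i / s (k i) ≤ s (I.centerMass _ k) :=
    (I.centerMass_div_self_eq x (s ∘ k) fun i hi ↦ (hpos i hi).ne').symm.trans_le
      (hs.le_map_centerMass ht hT hk)
  exact div_le_of_le_mul₀ ((div_nonneg (sum_nonneg hx) hT.le).trans hjensen) hT.le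
    ((div_le_iff₀' hT).1 hjensen)

end TimeAveragedAllocation

theorem stmt_1_general (s : ℝ → ℝ)
    (hconc : ConcaveOn ℝ (Set.Ici (1 : ℝ)) s)
    (hpos : ∀ k, 1 ≤ k → 0 < s k)
    (x₁ x₂ k₁ k₂ t₁ t₂ k : ℝ)
    (hx₁ : 0 < x₁) (hx₂ : 0 < x₂) (hk₁ : 1 ≤ k₁) (hk₂ : 1 ≤ k₂)
    (ht₁ : t₁ = x₁ / s k₁) (ht₂ : t₂ = x₂ / s k₂)
    (hk : k = k₁ * (t₁ / (t₁ + t₂)) + k₂ * (t₂ / (t₁ + t₂))) :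
    (x₁ + x₂) / s k ≤ t₁ + t₂ := by
  have key := hconc.sum_div_map_centerMass_le {0, 1} ![x₁, x₂] ![k₁, k₂]
    (by simp [hx₁.le, hx₂.le]) (by simp [hk₁, hk₂]) (by simp [hpos, hk₁, hk₂])
  rw [centerMass_pair _ _ _ _ zero_ne_one] at key
  simp only [sum_pair zero_ne_one, Matrix.cons_val_zero, Matrix.cons_val_one, smul_eq_mul] at key
  rw [hk, ht₁, ht₂]
  convert key using 3
  ring

/-- Averaging two allocation levels with a concave, nondecreasing, positive
speedup function: processing all the work at the time-averaged constant allocation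
completes at least as fast. -/
theorem stmt_1 (s : ℝ → ℝ)
    (hconc : ConcaveOn ℝ (Set.Ici (1 : ℝ)) s)
    (hmono : ∀ k₁ k₂, 1 ≤ k₁ → k₁ ≤ k₂ → s k₁ ≤ s k₂)
    (hpos : ∀ k, 1 ≤ k → 0 < s k)
    (x₁ x₂ k₁ k₂ t₁ t₂ k : ℝ)
    (hx₁ : 0 < x₁) (hx₂ : 0 < x₂) (hk₁ : 1 ≤ k₁) (hk₂ : 1 ≤ k₂)
    (ht₁ : t₁ = x₁ / s k₁) (ht₂ : t₂ = x₂ / s k₂)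
    (hk : k = k₁ * (t₁ / (t₁ + t₂)) + k₂ * (t₂ / (t₁ + t₂))) :
    (x₁ + x₂) / s k ≤ t₁ + t₂ :=
  stmt_1_general s hconc hpos x₁ x₂ k₁ k₂ t₁ t₂ k hx₁ hx₂ hk₁ hk₂ ht₁ ht₂ hk
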